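/- The Novikov ring Nov = Nov_ℤ with integer coefficients is a principal ideal domain. -/

import Mathlib

/-- The Novikov condition: for every `c ∈ ℝ` the set of exponents `γ > c`
with nonzero coefficient is finite. -/
def NovCond (k : Type) [Zero k] (x : ℝ → k) : Prop :=
  ∀ c : ℝ, {γ : ℝ | x γ ≠ 0 ∧ c < γ}.Finite

/-- The underlying set of the Novikov ring `Nov_k`: formal series
`Σ_γ x(γ)·t^γ` satisfying the Novikov finiteness condition. -/
def Nov (k : Type) [Zero k] : Type :=
  {x : ℝ → k // NovCond k x}

/-!
Reversing the order of `ℝ`, `Nov k` is the subring of the Hahn series ring `k⟦ℝᵒᵈ⟧` formed by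
the series whose support has finitely many points below every bound; this gives the ring
structure. Let `k` be a PID and `I` an ideal. The leading coefficients of the elements of `I`
form an ideal `(d)` of `k`; pick `x ∈ I` of order `0` with leading coefficient `d`. Long division
of `y ∈ I` by `x`, cancelling the leading term of each remainder by a monomial multiple of `x`
(possible since `d` divides the leading coefficient of every remainder, which lies in `I`), yields
remainders of strictly increasing order with supports in `supp y + ⟨supp x⟩`. That set again has
finitely many points below every bound, because the value group is archimedean, so the orders
tend to infinity and the partial quotients converge coefficientwise to some `q` with `y = q * x`.
-/

open Set Pointwise HahnSeries

def Set.FiniteBelow {Γ : Type*} [LT Γ] (s : Set Γ) : Prop :=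
  ∀ c : Γ, {γ ∈ s | γ < c}.Finite

theorem AddSubmonoid.eq_zero_or_exists_add_of_mem_closure {M : Type*} [AddMonoid M] {s : Set M}
    {m : M} (hm : m ∈ AddSubmonoid.closure s) :
    m = 0 ∨ ∃ a ∈ s, a ≠ 0 ∧ ∃ m' ∈ AddSubmonoid.closure s, m = a + m' := by
  induction hm using AddSubmonoid.closure_induction with
  | mem a ha =>
    by_cases h : a = 0
    · exact .inl h
    · exact .inr ⟨a, ha, h, 0, zero_mem _, (add_zero a).symm⟩
  | zero => exact .inl rfl
  | add m n _ hn hm' ihn =>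
    rcases hm' with rfl | ⟨a, ha, ha0, m', hm', rfl⟩
    · simpa using ihn
    · exact .inr ⟨a, ha, ha0, m' + n, add_mem hm' hn, add_assoc a m' n⟩

namespace Set.FiniteBelow

section LinearOrder

variable {Γ : Type*} [LinearOrder Γ] {s t : Set Γ}

theorem mono (ht : t.FiniteBelow) (h : s ⊆ t) : s.FiniteBelow :=
  fun c => (ht c).subset fun _ hγ => ⟨h hγ.1, hγ.2⟩

theorem _root_.Set.Finite.finiteBelow (h : s.Finite) : s.FiniteBelow :=
  fun _ => h.subset fun _ hγ => hγ.1

theorem union (hs : s.FiniteBelow) (ht : t.FiniteBelow) : (s ∪ t).FiniteBelow :=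
  fun c => ((hs c).union (ht c)).subset fun _ ⟨hγ, hc⟩ => hγ.imp (⟨·, hc⟩) (⟨·, hc⟩)

theorem finite_le (hs : s.FiniteBelow) (c : Γ) : {γ ∈ s | γ ≤ c}.Finite :=
  ((hs c).union (finite_singleton c)).subset fun _ ⟨hγ, hc⟩ =>
    hc.lt_or_eq.imp (fun h => ⟨hγ, h⟩) id

theorem isPWO (hs : s.FiniteBelow) : s.IsPWO := by
  refine (isWF_iff_no_descending_seq.2 fun f hf hmem => ?_).isPWO
  have hinj : Function.Injective fun n => f (n + 1) := hf.injective.comp (add_left_injective 1)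
  exact infinite_of_injective_forall_mem (s := {γ ∈ s | γ < f 0}) hinj
    (fun n => ⟨hmem _, hf n.succ_pos⟩) (hs (f 0))

end LinearOrder

variable {Γ : Type*} [AddCommGroup Γ] [LinearOrder Γ] [IsOrderedAddMonoid Γ] {s t : Set Γ}

theorem add (hs : s.FiniteBelow) (ht : t.FiniteBelow) : (s + t).FiniteBelow := by
  rcases s.eq_empty_or_nonempty with rfl | hs₀
  · simp [finite_empty.finiteBelow]
  rcases t.eq_empty_or_nonempty with rfl | ht₀
  · simp [finite_empty.finiteBelow]
  intro c
  set a := hs.isPWO.isWF.min hs₀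
  set b := ht.isPWO.isWF.min ht₀
  refine ((hs (c - b)).add (ht (c - a))).subset ?_
  rintro _ ⟨⟨x, hx, y, hy, rfl⟩, hc⟩
  have hxa : a ≤ x := hs.isPWO.isWF.min_le hs₀ hx
  have hyb : b ≤ y := ht.isPWO.isWF.min_le ht₀ hy
  exact ⟨x, ⟨hx, lt_sub_iff_add_lt.2 ((add_le_add le_rfl hyb).trans_lt hc)⟩, y,
    ⟨hy, lt_sub_iff_add_lt'.2 ((add_le_add hxa le_rfl).trans_lt hc)⟩, rfl⟩

theorem addSubmonoid_closure [Archimedean Γ] (hs : s.FiniteBelow) (hs₀ : ∀ x ∈ s, 0 ≤ x) :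
    (AddSubmonoid.closure s : Set Γ).FiniteBelow := by
  have hC₀ : ∀ m ∈ AddSubmonoid.closure s, 0 ≤ m := fun m hm =>
    AddSubmonoid.closure_induction hs₀ le_rfl (fun _ _ _ _ => add_nonneg) hm
  rcases {a ∈ s | a ≠ 0}.eq_empty_or_nonempty with hP | hP
  · refine (finite_singleton 0).finiteBelow.mono fun m hm => ?_
    rcases AddSubmonoid.eq_zero_or_exists_add_of_mem_closure hm with h | ⟨a, ha, ha0, -⟩
    · exact h
    · exact (hP.subset ⟨ha, ha0⟩).elim
  have hPwf : IsWF {a ∈ s | a ≠ 0} := (hs.mono (sep_subset s _)).isPWO.isWF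
  set m₀ := hPwf.min hP
  have hm₀ : 0 < m₀ := (hs₀ _ (hPwf.min_mem hP).1).lt_of_ne (hPwf.min_mem hP).2.symm
  -- Peeling off a summand `a ≥ m₀` of an element of the closure lowers its bound by `m₀`.
  have key (n : ℕ) : {m ∈ (AddSubmonoid.closure s : Set Γ) | m < n • m₀}.Finite := by
    induction n with
    | zero =>
      exact finite_empty.subset fun m ⟨hm, hlt⟩ => ((hC₀ m hm).not_gt (by simpa using hlt)).elim
    | succ n ih =>
      refine ((finite_singleton 0).union ((hs ((n + 1) • m₀)).add ih)).subset ?_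
      rintro m ⟨hm, hlt⟩
      rcases AddSubmonoid.eq_zero_or_exists_add_of_mem_closure hm with
        rfl | ⟨a, ha, ha0, m', hm', rfl⟩
      · exact .inl rfl
      · have hm₀a : m₀ ≤ a := hPwf.min_le hP ⟨ha, ha0⟩
        refine .inr ⟨a, ⟨ha, (le_add_of_nonneg_right (hC₀ m' hm')).trans_lt hlt⟩, m', ⟨hm', ?_⟩,
          rfl⟩
        rw [succ_nsmul] at hlt
        exact lt_of_add_lt_add_right
          ((add_le_add le_rfl hm₀a).trans_lt (by rwa [add_comm] at hlt))
  intro c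
  obtain ⟨n, hn⟩ := Archimedean.arch c hm₀
  exact (key n).subset fun m ⟨hm, hmc⟩ => ⟨hm, hmc.trans_le hn⟩

end Set.FiniteBelow

section NovikovSubring

variable (Γ k : Type*) [AddCommGroup Γ] [LinearOrder Γ] [IsOrderedAddMonoid Γ] [CommRing k]

def novikovSubring : Subring (HahnSeries Γ k) where
  carrier := {f | f.support.FiniteBelow}
  zero_mem' := by simp [finite_empty.finiteBelow]
  one_mem' := (finite_singleton 0).finiteBelow.mono <| by
    rw [← single_zero_one]; exact support_single_subset
  add_mem' ha hb := (ha.union hb).mono (support_add_subset _ _)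
  neg_mem' ha := by simpa [support_neg] using ha
  mul_mem' ha hb := (ha.add hb).mono support_mul_subset

variable {Γ k}

theorem single_mem_novikovSubring (a : Γ) (c : k) : single a c ∈ novikovSubring Γ k :=
  (finite_singleton a).finiteBelow.mono support_single_subset

end NovikovSubring

section ExactDiv

variable {k : Type*} [CommRing k]

/-- `a / b` when `b ∣ a`; the junk value is `0`. -/
noncomputable def exactDiv (a b : k) : k := by
  classical exact if h : b ∣ a then h.choose else 0

theorem mul_exactDiv {a b : k} (h : b ∣ a) : b * exactDiv a b = a := by
  rw [exactDiv, dif_pos h]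
  exact h.choose_spec.symm

theorem exactDiv_zero [IsDomain k] {b : k} (hb : b ≠ 0) : exactDiv 0 b = 0 :=
  (mul_eq_zero.1 (mul_exactDiv (dvd_zero b))).resolve_left hb

end ExactDiv

namespace HahnSeries

variable {Γ k : Type*} [AddCommGroup Γ] [LinearOrder Γ] [CommRing k] (x : HahnSeries Γ k)

/-- The monomial whose product with `x` has the same leading term as `r`, as long as `x` has
order `0` and `x.leadingCoeff ∣ r.leadingCoeff`. -/
noncomputable def divTerm (r : HahnSeries Γ k) : HahnSeries Γ k :=
  single r.order (exactDiv r.leadingCoeff x.leadingCoeff)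

theorem divTerm_zero [IsDomain k] {x : HahnSeries Γ k} (hx : x ≠ 0) : x.divTerm 0 = 0 := by
  rw [divTerm, leadingCoeff_zero, exactDiv_zero (leadingCoeff_ne_zero.2 hx), single_eq_zero]

variable [IsOrderedAddMonoid Γ]

noncomputable def divRemainder (y : HahnSeries Γ k) : ℕ → HahnSeries Γ k
  | 0 => y
  | n + 1 => divRemainder y n - x.divTerm (divRemainder y n) * x

noncomputable def divQuotient (y : HahnSeries Γ k) (N : ℕ) : HahnSeries Γ k :=
  ∑ n ∈ Finset.range N, x.divTerm (x.divRemainder y n)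

variable {x}

theorem divRemainder_succ (y : HahnSeries Γ k) (n : ℕ) :
    x.divRemainder y (n + 1) = x.divRemainder y n - x.divTerm (x.divRemainder y n) * x := rfl

theorem eq_divQuotient_mul_add_divRemainder (y : HahnSeries Γ k) (N : ℕ) :
    y = x.divQuotient y N * x + x.divRemainder y N := by
  induction N with
  | zero => simp [divQuotient, divRemainder]
  | succ N ih =>
    rw [divQuotient, Finset.sum_range_succ, ← divQuotient, divRemainder_succ]
    linear_combination ih

section IsDomain

variable [IsDomain k]

theorem orderTop_lt_orderTop_sub_divTerm_mul {r : HahnSeries Γ k} (hx : x.orderTop = 0)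
    (hr : r ≠ 0) (hdvd : x.leadingCoeff ∣ r.leadingCoeff) :
    r.orderTop < (r - x.divTerm r * x).orderTop := by
  have hmul : x.leadingCoeff * exactDiv r.leadingCoeff x.leadingCoeff = r.leadingCoeff :=
    mul_exactDiv hdvd
  have hc : exactDiv r.leadingCoeff x.leadingCoeff ≠ 0 := fun h => by
    rw [h, mul_zero, eq_comm, leadingCoeff_eq_zero] at hmul
    exact hr hmul
  rw [← order_eq_orderTop_of_ne_zero hr]
  refine le_orderTop_of_leadingCoeff_eq (order_eq_orderTop_of_ne_zero hr).symm ?_ ?_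
  · rw [divTerm, orderTop_mul, orderTop_single hc, hx, add_zero]
  · rw [divTerm, leadingCoeff_mul, leadingCoeff_of_single, mul_comm, hmul]

theorem divRemainder_orderTop_monotone (hx : x.orderTop = 0) {y : HahnSeries Γ k}
    (hdvd : ∀ n, x.leadingCoeff ∣ (x.divRemainder y n).leadingCoeff) :
    Monotone fun n => (x.divRemainder y n).orderTop := by
  refine monotone_nat_of_le_succ fun n => ?_
  by_cases hr : x.divRemainder y n = 0
  · rw [divRemainder_succ, hr, divTerm_zero (orderTop_ne_top.1 (by simp [hx])), zero_mul, sub_zero]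
  · exact (orderTop_lt_orderTop_sub_divTerm_mul hx hr (hdvd n)).le

theorem support_divRemainder_subset (hx : x ≠ 0) (y : HahnSeries Γ k) (n : ℕ) :
    (x.divRemainder y n).support ⊆ y.support + AddSubmonoid.closure x.support := by
  induction n with
  | zero => exact fun g hg => ⟨g, hg, 0, zero_mem _, add_zero g⟩
  | succ n ih =>
    refine (support_sub_subset _ _).trans (union_subset ih ?_)
    by_cases hr : x.divRemainder y n = 0
    · simp [hr, divTerm_zero hx]
    refine support_mul_subset.trans ?_
    rintro _ ⟨i, hi, j, hj, rfl⟩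
    obtain ⟨a, ha, m, hm, hr₀⟩ := Set.mem_add.1 (ih (coeff_order_eq_zero.not.2 hr))
    obtain rfl : i = _ := support_single_subset hi
    refine ⟨a, ha, m + j, add_mem hm (AddSubmonoid.subset_closure hj), ?_⟩
    rw [← hr₀]
    exact (add_assoc a m j).symm

variable {y : HahnSeries Γ k} {T : Set Γ}

theorem exists_lt_orderTop_divRemainder (hx : x.orderTop = 0)
    (hdvd : ∀ n, x.leadingCoeff ∣ (x.divRemainder y n).leadingCoeff) (hT : T.FiniteBelow)
    (hsupp : ∀ n, (x.divRemainder y n).support ⊆ T) (g : Γ) :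
    ∃ N, (g : WithTop Γ) < (x.divRemainder y N).orderTop := by
  by_contra! hle
  have hne (n : ℕ) : x.divRemainder y n ≠ 0 := fun h => by simpa [h] using hle n
  have hmono : StrictMono fun n => (x.divRemainder y n).order := by
    refine strictMono_nat_of_lt_succ fun n => ?_
    have := orderTop_lt_orderTop_sub_divTerm_mul hx (hne n) (hdvd n)
    rwa [← divRemainder_succ, ← order_eq_orderTop_of_ne_zero (hne n),
      ← order_eq_orderTop_of_ne_zero (hne (n + 1)), WithTop.coe_lt_coe] at this
  refine infinite_of_injective_forall_mem hmono.injective (fun n => ?_) (hT.finite_le g)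
  refine ⟨hsupp n (coeff_order_eq_zero.not.2 (hne n)), ?_⟩
  rw [← WithTop.coe_le_coe, order_eq_orderTop_of_ne_zero (hne n)]
  exact hle n

theorem coeff_divQuotient_eq_of_le (hx : x.orderTop = 0)
    (hdvd : ∀ n, x.leadingCoeff ∣ (x.divRemainder y n).leadingCoeff) {N M : ℕ} (hNM : N ≤ M)
    {g : Γ} (hg : (g : WithTop Γ) < (x.divRemainder y N).orderTop) :
    (x.divQuotient y M).coeff g = (x.divQuotient y N).coeff g := by
  have hdiff : (x.divQuotient y M - x.divQuotient y N) * x =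
      x.divRemainder y N - x.divRemainder y M := by
    linear_combination (eq_divQuotient_mul_add_divRemainder (x := x) y N) -
      eq_divQuotient_mul_add_divRemainder (x := x) y M
  have hle : (x.divRemainder y N).orderTop ≤ (x.divQuotient y M - x.divQuotient y N).orderTop := by
    calc (x.divRemainder y N).orderTop
        = min (x.divRemainder y N).orderTop (x.divRemainder y M).orderTop :=
          (min_eq_left (divRemainder_orderTop_monotone hx hdvd hNM)).symm
      _ ≤ (x.divRemainder y N - x.divRemainder y M).orderTop := min_orderTop_le_orderTop_sub
      _ = (x.divQuotient y M - x.divQuotient y N).orderTop := by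
          rw [← hdiff, orderTop_mul, hx, add_zero]
  rw [← sub_eq_zero, ← coeff_sub]
  exact coeff_eq_zero_of_lt_orderTop (hg.trans_le hle)

theorem support_divQuotient_subset (hx : x ≠ 0) (hsupp : ∀ n, (x.divRemainder y n).support ⊆ T)
    (N : ℕ) : (x.divQuotient y N).support ⊆ T := by
  intro g hg
  rw [mem_support, divQuotient, coeff_sum] at hg
  obtain ⟨n, -, hn⟩ := Finset.exists_ne_zero_of_sum_ne_zero hg
  have hr : x.divRemainder y n ≠ 0 := fun h => by simp [h, divTerm_zero hx] at hn
  obtain rfl : g = _ := support_single_subset hn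
  exact hsupp n (coeff_order_eq_zero.not.2 hr)

theorem exists_eq_mul_of_dvd_leadingCoeff_divRemainder (hx : x.orderTop = 0)
    (hdvd : ∀ n, x.leadingCoeff ∣ (x.divRemainder y n).leadingCoeff) (hT : T.FiniteBelow)
    (hsupp : ∀ n, (x.divRemainder y n).support ⊆ T) :
    ∃ q : HahnSeries Γ k, q.support ⊆ T ∧ y = q * x := by
  have hx₀ : x ≠ 0 := orderTop_ne_top.1 (by simp [hx])
  choose N hN using exists_lt_orderTop_divRemainder hx hdvd hT hsupp
  have hsuppQ : (fun g => (x.divQuotient y (N g)).coeff g).support ⊆ T := fun g hg =>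
    support_divQuotient_subset hx₀ hsupp (N g) hg
  let q : HahnSeries Γ k := ⟨fun g => (x.divQuotient y (N g)).coeff g, hT.isPWO.mono hsuppQ⟩
  have hq {g : Γ} {M : ℕ} (hM : (g : WithTop Γ) < (x.divRemainder y M).orderTop) :
      q.coeff g = (x.divQuotient y M).coeff g :=
    (coeff_divQuotient_eq_of_le hx hdvd (le_max_left _ M) (hN g)).symm.trans
      (coeff_divQuotient_eq_of_le hx hdvd (le_max_right (N g) M) hM)
  refine ⟨q, hsuppQ, ?_⟩
  ext g
  have hlt : (g : WithTop Γ) < ((q - x.divQuotient y (N g)) * x).orderTop := by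
    rw [orderTop_mul, hx, add_zero]
    refine (hN g).trans_le (le_orderTop_iff_forall.2 fun j hj => ?_)
    rw [coeff_sub, hq hj, sub_self]
  have hq_split : q * x = x.divQuotient y (N g) * x + (q - x.divQuotient y (N g)) * x := by ring
  conv_lhs => rw [eq_divQuotient_mul_add_divRemainder (x := x) y (N g)]
  rw [hq_split, coeff_add, coeff_add, coeff_eq_zero_of_lt_orderTop (hN g),
    coeff_eq_zero_of_lt_orderTop hlt]

end IsDomain

end HahnSeries

namespace novikovSubring

variable {Γ k : Type*} [AddCommGroup Γ] [LinearOrder Γ] [IsOrderedAddMonoid Γ] [CommRing k]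
  {I : Ideal (novikovSubring Γ k)}

theorem exists_mem_coe_eq_divRemainder {x y : novikovSubring Γ k} (hx : x ∈ I) (hy : y ∈ I)
    (n : ℕ) : ∃ z ∈ I, (z : HahnSeries Γ k) = (x : HahnSeries Γ k).divRemainder y n := by
  induction n with
  | zero => exact ⟨y, hy, rfl⟩
  | succ n ih =>
    obtain ⟨z, hz, hzr⟩ := ih
    refine ⟨z - ⟨(x : HahnSeries Γ k).divTerm z, single_mem_novikovSubring _ _⟩ * x,
      I.sub_mem hz (I.mul_mem_left _ hx), ?_⟩
    rw [divRemainder_succ, ← hzr]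
    rfl

theorem dvd_of_forall_dvd_leadingCoeff [Archimedean Γ] [IsDomain k] {x y : novikovSubring Γ k}
    (hxI : x ∈ I) (hx : (x : HahnSeries Γ k).orderTop = 0)
    (hdvd : ∀ z ∈ I, (x : HahnSeries Γ k).leadingCoeff ∣ (z : HahnSeries Γ k).leadingCoeff)
    (hyI : y ∈ I) : x ∣ y := by
  have hx₀ : (x : HahnSeries Γ k) ≠ 0 := orderTop_ne_top.1 (by simp [hx])
  have hx_nonneg (s : Γ) (hs : s ∈ (x : HahnSeries Γ k).support) : 0 ≤ s := by
    simpa [hx] using orderTop_le_of_coeff_ne_zero hs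
  have hT := Set.FiniteBelow.add y.2 (Set.FiniteBelow.addSubmonoid_closure x.2 hx_nonneg)
  obtain ⟨q, hqT, hq⟩ := exists_eq_mul_of_dvd_leadingCoeff_divRemainder hx
    (fun n => by
      obtain ⟨z, hz, hzr⟩ := exists_mem_coe_eq_divRemainder hxI hyI n
      exact hzr ▸ hdvd z hz)
    hT (support_divRemainder_subset hx₀ y)
  exact ⟨⟨q, hT.mono hqT⟩, Subtype.ext (hq.trans (mul_comm _ _))⟩

variable (I) in
/-- The leading coefficients of `I`, each shifted to order `0` so that the ideal axioms are
immediate. -/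
def leadingCoeffIdeal : Ideal k where
  carrier := {a | ∃ z ∈ I, 0 ≤ (z : HahnSeries Γ k).orderTop ∧ (z : HahnSeries Γ k).coeff 0 = a}
  add_mem' := by
    rintro _ _ ⟨z, hz, hz0, rfl⟩ ⟨w, hw, hw0, rfl⟩
    exact ⟨z + w, I.add_mem hz hw, (le_min hz0 hw0).trans min_orderTop_le_orderTop_add, coeff_add⟩
  zero_mem' := ⟨0, I.zero_mem, by simp, rfl⟩
  smul_mem' := by
    rintro c _ ⟨z, hz, hz0, rfl⟩
    refine ⟨⟨single 0 c, single_mem_novikovSubring _ _⟩ * z, I.mul_mem_left _ hz, ?_, ?_⟩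
    · exact (add_nonneg orderTop_single_le hz0).trans orderTop_add_le_mul
    · exact coeff_single_zero_mul

theorem leadingCoeff_mem_leadingCoeffIdeal {z : novikovSubring Γ k} (hz : z ∈ I) :
    (z : HahnSeries Γ k).leadingCoeff ∈ leadingCoeffIdeal I := by
  by_cases hz₀ : (z : HahnSeries Γ k) = 0
  · rw [hz₀, leadingCoeff_zero]
    exact zero_mem _
  set o := (z : HahnSeries Γ k).order
  refine ⟨⟨single (-o) 1, single_mem_novikovSubring _ _⟩ * z, I.mul_mem_left _ hz, ?_, ?_⟩
  · calc (0 : WithTop Γ) = ((-o : Γ) : WithTop Γ) + (o : WithTop Γ) := by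
          rw [← WithTop.coe_add, neg_add_cancel, WithTop.coe_zero]
      _ ≤ (single (-o) (1 : k)).orderTop + (z : HahnSeries Γ k).orderTop :=
          add_le_add orderTop_single_le (order_eq_orderTop_of_ne_zero hz₀).le
      _ ≤ _ := orderTop_add_le_mul
  · have := coeff_single_mul_add (r := (1 : k)) (x := (z : HahnSeries Γ k)) (a := o) (b := -o)
    rw [add_neg_cancel, one_mul] at this
    exact this.trans leadingCoeff_eq.symm

theorem exists_orderTop_eq_zero_of_mem_leadingCoeffIdeal {a : k}
    (ha : a ∈ leadingCoeffIdeal I) (ha₀ : a ≠ 0) :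
    ∃ x ∈ I, (x : HahnSeries Γ k).orderTop = 0 ∧ (x : HahnSeries Γ k).leadingCoeff = a := by
  obtain ⟨x, hx, hx0, rfl⟩ := ha
  have hx₀ : (x : HahnSeries Γ k) ≠ 0 := ne_zero_of_coeff_ne_zero ha₀
  have hord : (x : HahnSeries Γ k).orderTop = 0 :=
    le_antisymm (orderTop_le_of_coeff_ne_zero ha₀) hx0
  refine ⟨x, hx, hord, ?_⟩
  rw [leadingCoeff_eq, ← WithTop.coe_eq_zero.1 ((order_eq_orderTop_of_ne_zero hx₀).trans hord)]

instance [Archimedean Γ] [IsDomain k] [IsPrincipalIdealRing k] :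
    IsPrincipalIdealRing (novikovSubring Γ k) where
  principal I := by
    obtain ⟨d, hd⟩ := Submodule.IsPrincipal.principal (leadingCoeffIdeal I)
    have hdvd (z) (hz : z ∈ I) : d ∣ (z : HahnSeries Γ k).leadingCoeff := by
      have := leadingCoeff_mem_leadingCoeffIdeal hz
      rw [hd] at this
      exact Ideal.mem_span_singleton.1 this
    by_cases hd₀ : d = 0
    · refine ⟨0, ?_⟩
      rw [Submodule.span_zero_singleton, eq_bot_iff]
      intro z hz
      have := hdvd z hz
      rw [hd₀, zero_dvd_iff, leadingCoeff_eq_zero] at this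
      exact (Submodule.mem_bot _).2 (Subtype.ext this)
    · have hd_mem : d ∈ leadingCoeffIdeal I := hd ▸ Submodule.mem_span_singleton_self d
      obtain ⟨x, hxI, hx, rfl⟩ := exists_orderTop_eq_zero_of_mem_leadingCoeffIdeal hd_mem hd₀
      refine ⟨x, le_antisymm (fun y hy => Ideal.mem_span_singleton.2
        (dvd_of_forall_dvd_leadingCoeff hxI hx hdvd hy)) ?_⟩
      exact Ideal.span_le.2 (by simpa using hxI)

end novikovSubring

theorem HahnSeries.coeff_mul_eq_finsum {Γ R : Type*} [AddCommMonoid Γ] [PartialOrder Γ]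
    [IsOrderedCancelAddMonoid Γ] [NonUnitalNonAssocSemiring R] (x y : HahnSeries Γ R) (a : Γ) :
    (x * y).coeff a = ∑ᶠ (p : Γ × Γ) (_ : p.1 + p.2 = a), x.coeff p.1 * y.coeff p.2 := by
  rw [coeff_mul]
  refine (finsum_cond_eq_sum_of_cond_iff _ fun {p} hp => ?_).symm
  rw [Finset.mem_antidiagonal]
  exact ⟨fun h => ⟨left_ne_zero_of_mul hp, right_ne_zero_of_mul hp, h⟩, fun h => h.2.2⟩

namespace Nov

variable (k : Type) [CommRing k]

theorem novCond_iff_finiteBelow (x : ℝ → k) :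
    NovCond k x ↔ (Function.support fun γ : ℝᵒᵈ => x (OrderDual.ofDual γ)).FiniteBelow :=
  Iff.rfl

def equivNovikovSubring : Nov k ≃ novikovSubring ℝᵒᵈ k where
  toFun x := ⟨⟨fun γ => x.1 (OrderDual.ofDual γ), ((novCond_iff_finiteBelow k x.1).1 x.2).isPWO⟩,
    (novCond_iff_finiteBelow k x.1).1 x.2⟩
  invFun f := ⟨fun γ => (f : HahnSeries ℝᵒᵈ k).coeff (OrderDual.toDual γ), f.2⟩
  left_inv _ := rfl
  right_inv _ := rfl

noncomputable instance : CommRing (Nov k) := (equivNovikovSubring k).commRing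

noncomputable def ringEquivNovikovSubring : Nov k ≃+* novikovSubring ℝᵒᵈ k :=
  (equivNovikovSubring k).ringEquiv

instance [IsDomain k] : IsDomain (Nov k) := (equivNovikovSubring k).isDomain

instance [IsDomain k] [IsPrincipalIdealRing k] : IsPrincipalIdealRing (Nov k) :=
  IsPrincipalIdealRing.of_surjective (ringEquivNovikovSubring k).symm
    (ringEquivNovikovSubring k).symm.surjective

variable {k}

theorem val_add (x y : Nov k) : (x + y).1 = fun γ => x.1 γ + y.1 γ := rfl

theorem val_mul (x y : Nov k) (γ : ℝ) :
    (x * y).1 γ = ∑ᶠ (p : ℝ × ℝ) (_ : p.1 + p.2 = γ), x.1 p.1 * y.1 p.2 :=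
  coeff_mul_eq_finsum (equivNovikovSubring k x : HahnSeries ℝᵒᵈ k) (equivNovikovSubring k y) γ

theorem val_one : (1 : Nov k).1 = fun γ => if γ = 0 then 1 else 0 := by
  ext γ
  exact coeff_one

theorem val_zero : (0 : Nov k).1 = fun _ => 0 := rfl

end Nov

/-- **The Novikov ring `Nov = Nov_ℤ` is a principal ideal domain.**  There is
a commutative ring structure on `Nov ℤ` whose addition is pointwise, whose
multiplication is convolution `(x·y)(γ) = Σ_{γ₁+γ₂=γ} x(γ₁)·y(γ₂)` and whose
unit is the indicator function of `0 ∈ ℝ`, and with this structure `Nov ℤ`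
is an integral domain in which every ideal is principal. -/
theorem novikov_ring_int_is_PID :
    ∃ R : CommRing (Nov ℤ),
      letI : CommRing (Nov ℤ) := R
      (∀ x y : Nov ℤ, (x + y).1 = fun γ => x.1 γ + y.1 γ) ∧
      (∀ (x y : Nov ℤ) (γ : ℝ),
        (x * y).1 γ = ∑ᶠ (p : ℝ × ℝ) (_ : p.1 + p.2 = γ), x.1 p.1 * y.1 p.2) ∧
      ((1 : Nov ℤ).1 = fun γ => if γ = 0 then (1 : ℤ) else 0) ∧
      ((0 : Nov ℤ).1 = fun _ => (0 : ℤ)) ∧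
      IsDomain (Nov ℤ) ∧ IsPrincipalIdealRing (Nov ℤ) :=
  ⟨inferInstance, Nov.val_add, Nov.val_mul, Nov.val_one, Nov.val_zero, inferInstance,
    inferInstance⟩
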